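/- Let K ⊂ ℂ be compact and let ν be a finite Borel measure on K such that (K, ν) satisfies the Bernstein–Markov property. For k ≥ 1 set Z_k := ∫_{K^{k+1}} |VDM_k(z_0,…,z_k)|² dν(z_0)⋯dν(z_k), where VDM_k(z_0,…,z_k) = ∏_{0 ≤ i < j ≤ k}(z_j − z_i), and set δ_k(K) := max_{z_0,…,z_k ∈ K} ∏_{i<j}|z_i − z_j|^{2/(k(k+1))}. Then there is a real number δ(K) ≥ 0 such that δ_k(K) → δ(K) (the sequence δ_k(K) is nonincreasing) and Z_k^{1/k²} → δ(K) as k → ∞. -/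

import Mathlib

open MeasureTheory Filter

/-- `(K, ν)` satisfies the Bernstein–Markov property: for every `ε > 0` there is `C > 0`
such that for every `k ≥ 1` and every polynomial `p` of degree at most `k`,
`sup_{z ∈ K} |p(z)| ≤ C (1+ε)^k (∫_K |p|² dν)^{1/2}`. -/
def BernsteinMarkov (K : Set ℂ) (ν : Measure ℂ) : Prop :=
  ∀ ε : ℝ, 0 < ε → ∃ C : ℝ, 0 < C ∧ ∀ k : ℕ, 1 ≤ k → ∀ p : Polynomial ℂ,
    p.natDegree ≤ k → ∀ z ∈ K,
      ‖p.eval z‖ ≤ C * (1 + ε) ^ k * Real.sqrt (∫ w in K, ‖p.eval w‖ ^ 2 ∂ν)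

/-- The classical Vandermonde determinant `VDM_k(z_0,…,z_k) = ∏_{i<j} (z_j - z_i)`. -/
noncomputable def VDM (k : ℕ) (z : Fin (k + 1) → ℂ) : ℂ :=
  ∏ i : Fin (k + 1), ∏ j ∈ Finset.Ioi i, (z j - z i)

/-- `Z_k = ∫_{K^{k+1}} |VDM_k(z_0,…,z_k)|² dν(z_0)⋯dν(z_k)`. -/
noncomputable def Zk (K : Set ℂ) (ν : Measure ℂ) (k : ℕ) : ℝ :=
  ∫ z in {z : Fin (k + 1) → ℂ | ∀ i, z i ∈ K}, ‖VDM k z‖ ^ 2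
    ∂(Measure.pi fun _ : Fin (k + 1) => ν)

/-- The `k`-th order diameter `δ_k(K) = max_{z_0,…,z_k ∈ K} ∏_{i<j} |z_i - z_j|^{2/(k(k+1))}`. -/
noncomputable def deltak (K : Set ℂ) (k : ℕ) : ℝ :=
  sSup ((fun z : Fin (k + 1) → ℂ => ‖VDM k z‖ ^ ((2 : ℝ) / ((k : ℝ) * ((k : ℝ) + 1)))) ''
    {z : Fin (k + 1) → ℂ | ∀ i, z i ∈ K})

/-!
Write `V_k` for the maximum of `|VDM_k|` on `K^{k+1}`, so that `δ_k = V_k^{2/(k(k+1))}`.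
Deleting one point from a maximal configuration of `k + 2` points and multiplying over the deleted
point gives `V_{k+1}^k ≤ V_k^{k+2}`, since every pair of points survives exactly `k` deletions;
hence `δ_k` decreases to some `δ ≥ 0`.

Trivially `Z_k ≤ V_k² ν(K)^{k+1}`. Conversely, `VDM_k` is a polynomial of degree `≤ k` in each
variable, so the Bernstein–Markov inequality bounds `|VDM_k|²` at a point by `(C(1+ε)^k)²` times its
integral in one variable; integrating out the variables one at a time gives
`V_k² ≤ (C(1+ε)^k)^{2(k+1)} Z_k`. After taking `k²`-th roots both bounds tend to `δ`, up to the
factor `(1+ε)²` with `ε > 0` arbitrary.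
-/

open Finset Function
open scoped ENNReal Topology

section PairProducts

variable {M : Type*} [CommMonoid M]

theorem prod_prod_Ioi_eq_prod_filter_lt {n : ℕ} (g : Fin n → Fin n → M) :
    ∏ i, ∏ j ∈ Ioi i, g i j =
      ∏ p ∈ univ.filter (fun p : Fin n × Fin n => p.1 < p.2), g p.1 p.2 := by
  rw [prod_filter, ← univ_product_univ, prod_product]
  refine prod_congr rfl fun i _ => ?_
  rw [← prod_filter, filter_lt_eq_Ioi]

theorem prod_filter_lt_succAbove {n : ℕ} (ℓ : Fin (n + 1)) (g : Fin (n + 1) → Fin (n + 1) → M) :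
    ∏ p ∈ univ.filter (fun p : Fin n × Fin n => p.1 < p.2), g (ℓ.succAbove p.1) (ℓ.succAbove p.2) =
      ∏ q ∈ univ.filter (fun q : Fin (n + 1) × Fin (n + 1) => q.1 < q.2 ∧ q.1 ≠ ℓ ∧ q.2 ≠ ℓ),
        g q.1 q.2 := by
  let e := (Fin.succAboveEmb ℓ).prodMap (Fin.succAboveEmb ℓ)
  have hmap : (univ.filter fun p : Fin n × Fin n => p.1 < p.2).map e =
      univ.filter fun q : Fin (n + 1) × Fin (n + 1) => q.1 < q.2 ∧ q.1 ≠ ℓ ∧ q.2 ≠ ℓ := by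
    ext ⟨a, b⟩
    simp only [Finset.mem_map, mem_filter, mem_univ, true_and, Prod.exists, e]
    constructor
    · rintro ⟨i, j, hij, h⟩
      obtain ⟨rfl, rfl⟩ := Prod.mk.inj h
      exact ⟨Fin.strictMono_succAbove ℓ hij, Fin.succAbove_ne ℓ i, Fin.succAbove_ne ℓ j⟩
    · rintro ⟨hab, ha, hb⟩
      obtain ⟨i, rfl⟩ := Fin.exists_succAbove_eq ha
      obtain ⟨j, rfl⟩ := Fin.exists_succAbove_eq hb
      exact ⟨i, j, (Fin.strictMono_succAbove ℓ).lt_iff_lt.mp hab, rfl⟩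
  rw [← hmap, prod_map]
  rfl

theorem prod_prod_Ioi_succAbove {n : ℕ} (g : Fin (n + 2) → Fin (n + 2) → M) :
    ∏ ℓ : Fin (n + 2), ∏ i : Fin (n + 1), ∏ j ∈ Ioi i, g (ℓ.succAbove i) (ℓ.succAbove j) =
      (∏ i, ∏ j ∈ Ioi i, g i j) ^ n := by
  simp only [prod_prod_Ioi_eq_prod_filter_lt, prod_filter_lt_succAbove]
  rw [prod_comm' (t' := univ.filter fun q : Fin (n + 2) × Fin (n + 2) => q.1 < q.2)
    (s' := fun q => univ.filter fun ℓ => q.1 ≠ ℓ ∧ q.2 ≠ ℓ) (by simp only [mem_filter, mem_univ, true_and]; tauto),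
    ← prod_pow]
  refine prod_congr rfl fun q hq => ?_
  have hcompl : (univ.filter fun ℓ : Fin (n + 2) => q.1 ≠ ℓ ∧ q.2 ≠ ℓ) = {q.1, q.2}ᶜ := by
    ext ℓ; simp [eq_comm]
  rw [prod_const, hcompl, card_compl, card_pair (mem_filter.mp hq).2.ne]
  simp

end PairProducts

open Polynomial in
theorem exists_polynomial_eval_eq_det_vandermonde_update {R : Type*} [CommRing R] {n : ℕ}
    (v : Fin (n + 1) → R) (i : Fin (n + 1)) :
    ∃ p : R[X], p.natDegree ≤ n ∧ ∀ t, p.eval t = (Matrix.vandermonde (update v i t)).det := by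
  refine ⟨∑ j : Fin (n + 1), C ((-1) ^ (i + j : ℕ) *
      ((Matrix.vandermonde v).submatrix i.succAbove j.succAbove).det) * X ^ (j : ℕ), ?_,
    fun t => ?_⟩
  · exact natDegree_sum_le_of_forall_le _ _ fun j _ =>
      (natDegree_C_mul_X_pow_le _ _).trans (Fin.is_le j)
  · have hminor (j : Fin (n + 1)) :
        (Matrix.vandermonde (update v i t)).submatrix i.succAbove j.succAbove =
          (Matrix.vandermonde v).submatrix i.succAbove j.succAbove := by
      ext a b
      simp [Matrix.vandermonde_apply, Fin.succAbove_ne]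
    rw [Matrix.det_succ_row _ i, eval_finsetSum]
    refine sum_congr rfl fun j _ => ?_
    simp only [eval_mul, eval_C, eval_X_pow, Matrix.vandermonde_apply, update_self, hminor]
    ring

theorem VDM_eq_det (k : ℕ) (z : Fin (k + 1) → ℂ) : VDM k z = (Matrix.vandermonde z).det :=
  (Matrix.det_vandermonde z).symm

theorem continuous_VDM (k : ℕ) : Continuous (VDM k) := by
  unfold VDM
  fun_prop

theorem prod_VDM_comp_succAbove (k : ℕ) (z : Fin (k + 2) → ℂ) :
    ∏ ℓ : Fin (k + 2), VDM k (z ∘ ℓ.succAbove) = VDM (k + 1) z ^ k :=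
  prod_prod_Ioi_succAbove fun i j => z j - z i

noncomputable def vdmMax (K : Set ℂ) (k : ℕ) : ℝ :=
  sSup ((fun z => ‖VDM k z‖) '' {z : Fin (k + 1) → ℂ | ∀ i, z i ∈ K})

section vdmMax

variable {K : Set ℂ}

theorem IsCompact.setOf_forall_mem {ι : Type*} (hK : IsCompact K) :
    IsCompact {z : ι → ℂ | ∀ i, z i ∈ K} := by
  simpa [Set.pi, Set.mem_univ, true_imp_iff] using isCompact_univ_pi fun _ : ι => hK

theorem norm_VDM_le_vdmMax (hK : IsCompact K) {k : ℕ} {z : Fin (k + 1) → ℂ}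
    (hz : ∀ i, z i ∈ K) : ‖VDM k z‖ ≤ vdmMax K k :=
  le_csSup (hK.setOf_forall_mem.image (continuous_VDM k).norm).bddAbove ⟨z, hz, rfl⟩

theorem exists_norm_VDM_eq_vdmMax (hK : IsCompact K) (hne : K.Nonempty) (k : ℕ) :
    ∃ z : Fin (k + 1) → ℂ, (∀ i, z i ∈ K) ∧ ‖VDM k z‖ = vdmMax K k := by
  obtain ⟨z, hz, h⟩ := hK.setOf_forall_mem.exists_sSup_image_eq
    ⟨fun _ => hne.some, fun _ => hne.some_mem⟩ (continuous_VDM k).norm.continuousOn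
  exact ⟨z, hz, h.symm⟩

theorem vdmMax_nonneg (K : Set ℂ) (k : ℕ) : 0 ≤ vdmMax K k :=
  Real.sSup_nonneg (by rintro _ ⟨z, -, rfl⟩; positivity)

theorem deltak_eq_vdmMax_rpow (hK : IsCompact K) (hne : K.Nonempty) (k : ℕ) :
    deltak K k = vdmMax K k ^ ((2 : ℝ) / ((k : ℝ) * ((k : ℝ) + 1))) := by
  obtain ⟨z, hz, hmax⟩ := exists_norm_VDM_eq_vdmMax hK hne k
  refine IsGreatest.csSup_eq ⟨⟨z, hz, congrArg (· ^ _) hmax⟩, ?_⟩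
  rintro _ ⟨w, hw, rfl⟩
  exact Real.rpow_le_rpow (norm_nonneg _) (norm_VDM_le_vdmMax hK hw) (by positivity)

theorem vdmMax_succ_pow_le (hK : IsCompact K) (hne : K.Nonempty) (k : ℕ) :
    vdmMax K (k + 1) ^ k ≤ vdmMax K k ^ (k + 2) := by
  obtain ⟨z, hz, hmax⟩ := exists_norm_VDM_eq_vdmMax hK hne (k + 1)
  calc vdmMax K (k + 1) ^ k = ∏ ℓ : Fin (k + 2), ‖VDM k (z ∘ ℓ.succAbove)‖ := by
        rw [← hmax, ← norm_pow, ← prod_VDM_comp_succAbove, norm_prod]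
    _ ≤ ∏ _ℓ : Fin (k + 2), vdmMax K k :=
        prod_le_prod (fun _ _ => norm_nonneg _) fun ℓ _ =>
          norm_VDM_le_vdmMax hK fun i => hz (ℓ.succAbove i)
    _ = vdmMax K k ^ (k + 2) := by rw [prod_const, card_univ, Fintype.card_fin]

theorem deltak_succ_le (hK : IsCompact K) {k : ℕ} (hk : 1 ≤ k) :
    deltak K (k + 1) ≤ deltak K k := by
  rcases K.eq_empty_or_nonempty with rfl | hne
  · simp [deltak]
  have hk₀ : (0 : ℝ) < k := by exact_mod_cast hk
  have key := Real.rpow_le_rpow (pow_nonneg (vdmMax_nonneg K _) _) (vdmMax_succ_pow_le hK hne k)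
    (by positivity : (0 : ℝ) ≤ 2 / (k * (k + 1) * (k + 2)))
  rw [← Real.rpow_natCast_mul (vdmMax_nonneg K _), ← Real.rpow_natCast_mul (vdmMax_nonneg K _)]
    at key
  rw [deltak_eq_vdmMax_rpow hK hne, deltak_eq_vdmMax_rpow hK hne]
  convert key using 2 <;> push_cast <;> field_simp
  ring

theorem deltak_le_of_le (hK : IsCompact K) {m n : ℕ} (hm : 1 ≤ m) (hmn : m ≤ n) :
    deltak K n ≤ deltak K m := by
  induction n, hmn using Nat.le_induction with
  | base => exact le_rfl
  | succ n hmn ih => exact (deltak_succ_le hK (hm.trans hmn)).trans ih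

theorem deltak_nonneg (K : Set ℂ) (k : ℕ) : 0 ≤ deltak K k :=
  Real.sSup_nonneg (by rintro _ ⟨z, -, rfl⟩; positivity)

theorem tendsto_deltak (hK : IsCompact K) :
    Tendsto (deltak K) atTop (𝓝 (⨅ k, deltak K (k + 1))) :=
  (tendsto_add_atTop_iff_nat 1).mp <| tendsto_atTop_ciInf
    (antitone_nat_of_succ_le fun k => deltak_succ_le hK (Nat.le_add_left 1 k))
    ⟨0, by rintro _ ⟨k, rfl⟩; exact deltak_nonneg K _⟩

theorem deltak_rpow_succ_div_self (hK : IsCompact K) (hne : K.Nonempty) {k : ℕ}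
    (hk : k ≠ 0) :
    deltak K k ^ (((k : ℝ) + 1) / k) = (vdmMax K k ^ 2) ^ (1 / (k : ℝ) ^ 2) := by
  rw [deltak_eq_vdmMax_rpow hK hne, ← Real.rpow_mul (vdmMax_nonneg K k),
    ← Real.rpow_natCast_mul (vdmMax_nonneg K k)]
  congr 1
  field_simp
  push_cast
  ring

end vdmMax

section IteratedSlices

variable {ι : Type*} [DecidableEq ι] {X : ι → Type*} [∀ i, MeasurableSpace (X i)]
  {μ : ∀ i, Measure (X i)} [∀ i, SigmaFinite (μ i)] {f : (∀ i, X i) → ℝ≥0∞} {A : ℝ≥0∞}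

theorem le_pow_card_mul_lmarginal (hf : Measurable f)
    (hA : ∀ i x, f x ≤ A * ∫⁻ t, f (update x i t) ∂μ i) (s : Finset ι) (x : ∀ i, X i) :
    f x ≤ A ^ #s * (∫⋯∫⁻_s, f ∂μ) x := by
  induction s using Finset.induction generalizing x with
  | empty => simp
  | insert i s hi ih =>
    have hslice : Measurable fun y => ∫⁻ t, f (update y i t) ∂μ i := by
      simpa only [lmarginal_singleton] using hf.lmarginal μ (s := {i})
    calc f x ≤ A ^ #s * (∫⋯∫⁻_s, f ∂μ) x := ih x
      _ ≤ A ^ #s * (∫⋯∫⁻_s, fun y => A * ∫⁻ t, f (update y i t) ∂μ i ∂μ) x := by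
        gcongr
        exact lmarginal_mono (hA i) x
      _ = A ^ #(insert i s) * (∫⋯∫⁻_insert i s, f ∂μ) x := by
        rw [lmarginal_insert' f hf hi, card_insert_of_notMem hi, pow_succ, mul_assoc]
        exact congrArg _ (lintegral_const_mul _ (hslice.comp measurable_updateFinset))

theorem le_pow_card_mul_lintegral_pi [Fintype ι] (hf : Measurable f)
    (hA : ∀ i x, f x ≤ A * ∫⁻ t, f (update x i t) ∂μ i) (x : ∀ i, X i) :
    f x ≤ A ^ Fintype.card ι * ∫⁻ y, f y ∂Measure.pi μ := by
  simpa using le_pow_card_mul_lmarginal hf hA univ x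

end IteratedSlices

section Zk

variable {K : Set ℂ} {ν : Measure ℂ}

theorem Zk_nonneg (K : Set ℂ) (ν : Measure ℂ) (k : ℕ) : 0 ≤ Zk K ν k :=
  integral_nonneg fun _ => by positivity

theorem Zk_le [IsFiniteMeasure ν] (hK : IsCompact K) (k : ℕ) :
    Zk K ν k ≤ vdmMax K k ^ 2 * ν.real K ^ (k + 1) := by
  have hS : {z : Fin (k + 1) → ℂ | ∀ i, z i ∈ K} = Set.univ.pi fun _ => K := by ext; simp
  have hbound : ∀ z ∈ {z : Fin (k + 1) → ℂ | ∀ i, z i ∈ K}, ‖‖VDM k z‖ ^ 2‖ ≤ vdmMax K k ^ 2 :=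
    fun z hz => by simpa using pow_le_pow_left₀ (norm_nonneg _) (norm_VDM_le_vdmMax hK hz) 2
  calc Zk K ν k ≤ ‖Zk K ν k‖ := le_abs_self _
    _ ≤ vdmMax K k ^ 2 * (Measure.pi fun _ => ν).real {z : Fin (k + 1) → ℂ | ∀ i, z i ∈ K} :=
        norm_setIntegral_le_of_norm_le_const (measure_lt_top _ _) hbound
    _ = vdmMax K k ^ 2 * ν.real K ^ (k + 1) := by
        rw [hS, measureReal_def, Measure.pi_pi]
        simp [measureReal_def]

theorem ofReal_Zk [IsFiniteMeasure ν] (hK : IsCompact K) (k : ℕ) :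
    ENNReal.ofReal (Zk K ν k) =
      ∫⁻ z in {z : Fin (k + 1) → ℂ | ∀ i, z i ∈ K}, ENNReal.ofReal (‖VDM k z‖ ^ 2)
        ∂Measure.pi fun _ => ν :=
  ofReal_integral_eq_lintegral_ofReal
    (((continuous_VDM k).norm.pow 2).continuousOn.integrableOn_compact hK.setOf_forall_mem)
    (ae_of_all _ fun _ => by positivity)

theorem BernsteinMarkov.measureReal_pos (hBM : BernsteinMarkov K ν) (hne : K.Nonempty) :
    0 < ν.real K := by
  obtain ⟨C, hC, hbm⟩ := hBM 1 one_pos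
  have h := hbm 1 le_rfl 1 (by simp) _ hne.some_mem
  simp only [Polynomial.eval_one, norm_one, one_pow, setIntegral_const, smul_eq_mul, mul_one] at h
  exact Real.sqrt_pos.mp (pos_of_mul_pos_right (one_pos.trans_le h) (by positivity))

theorem ofReal_norm_eval_sq_le [IsFiniteMeasure ν] (hK : IsCompact K) {p : Polynomial ℂ} {c : ℝ}
    {z : ℂ}
    (h : ‖p.eval z‖ ≤ c * Real.sqrt (∫ w in K, ‖p.eval w‖ ^ 2 ∂ν)) :
    ENNReal.ofReal (‖p.eval z‖ ^ 2) ≤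
      ENNReal.ofReal (c ^ 2) * ∫⁻ w in K, ENNReal.ofReal (‖p.eval w‖ ^ 2) ∂ν := by
  have hint : IntegrableOn (fun w => ‖p.eval w‖ ^ 2) K ν :=
    (p.continuous.norm.pow 2).continuousOn.integrableOn_compact hK
  rw [← ofReal_integral_eq_lintegral_ofReal hint (ae_of_all _ fun _ => by positivity),
    ← ENNReal.ofReal_mul (sq_nonneg c)]
  refine ENNReal.ofReal_le_ofReal ?_
  calc ‖p.eval z‖ ^ 2 ≤ (c * Real.sqrt (∫ w in K, ‖p.eval w‖ ^ 2 ∂ν)) ^ 2 :=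
        pow_le_pow_left₀ (norm_nonneg _) h 2
    _ = c ^ 2 * ∫ w in K, ‖p.eval w‖ ^ 2 ∂ν := by
        rw [mul_pow, Real.sq_sqrt (integral_nonneg fun _ => by positivity)]

/-- Extended by zero off `K^{k+1}`, so that the one-variable Bernstein–Markov bound holds at every
point of `ℂ^{k+1}` and can be iterated. -/
noncomputable def vdmSqOn (K : Set ℂ) (k : ℕ) : (Fin (k + 1) → ℂ) → ℝ≥0∞ :=
  {z | ∀ i, z i ∈ K}.indicator fun z => ENNReal.ofReal (‖VDM k z‖ ^ 2)

theorem vdmSqOn_of_mem {k : ℕ} {z : Fin (k + 1) → ℂ} (hz : ∀ i, z i ∈ K) :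
    vdmSqOn K k z = ENNReal.ofReal (‖VDM k z‖ ^ 2) :=
  Set.indicator_of_mem (s := {z : Fin (k + 1) → ℂ | ∀ i, z i ∈ K}) hz _

theorem measurable_vdmSqOn (hK : IsCompact K) (k : ℕ) : Measurable (vdmSqOn K k) :=
  (ENNReal.measurable_ofReal.comp ((continuous_VDM k).norm.pow 2).measurable).indicator
    hK.setOf_forall_mem.isClosed.measurableSet

theorem lintegral_vdmSqOn [IsFiniteMeasure ν] (hK : IsCompact K) (k : ℕ) :
    ∫⁻ z, vdmSqOn K k z ∂Measure.pi (fun _ => ν) = ENNReal.ofReal (Zk K ν k) := by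
  rw [vdmSqOn, lintegral_indicator hK.setOf_forall_mem.isClosed.measurableSet, ofReal_Zk hK]

theorem vdmSqOn_le_mul_lintegral_update [IsFiniteMeasure ν] (hK : IsCompact K) {k : ℕ} {c : ℝ}
    (hbm : ∀ p : Polynomial ℂ, p.natDegree ≤ k → ∀ z ∈ K,
      ‖p.eval z‖ ≤ c * Real.sqrt (∫ w in K, ‖p.eval w‖ ^ 2 ∂ν))
    (i : Fin (k + 1)) (z : Fin (k + 1) → ℂ) :
    vdmSqOn K k z ≤ ENNReal.ofReal (c ^ 2) * ∫⁻ t, vdmSqOn K k (update z i t) ∂ν := by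
  by_cases hz : ∀ j, z j ∈ K
  swap
  · simp [vdmSqOn, hz]
  obtain ⟨p, hdeg, hp⟩ := exists_polynomial_eval_eq_det_vandermonde_update z i
  simp only [← VDM_eq_det] at hp
  have hslice : (fun t => vdmSqOn K k (update z i t)) =
      K.indicator fun t => ENNReal.ofReal (‖p.eval t‖ ^ 2) := by
    ext t
    have hmem : (∀ j, update z i t j ∈ K) ↔ t ∈ K := by
      simp [forall_update_iff z fun _ w => w ∈ K, hz]
    by_cases ht : t ∈ K
    · simp [vdmSqOn_of_mem (hmem.mpr ht), ht, hp]
    · simp [vdmSqOn, ht, mt hmem.mp ht]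
  rw [hslice, lintegral_indicator hK.isClosed.measurableSet]
  simpa [vdmSqOn_of_mem hz, hp] using ofReal_norm_eval_sq_le hK (hbm p hdeg (z i) (hz i))

theorem BernsteinMarkov.exists_sq_vdmMax_le [IsFiniteMeasure ν] (hBM : BernsteinMarkov K ν)
    (hK : IsCompact K) (hne : K.Nonempty) {ε : ℝ} (hε : 0 < ε) :
    ∃ C > 0, ∀ k ≥ 1, vdmMax K k ^ 2 ≤ ((C * (1 + ε) ^ k) ^ 2) ^ (k + 1) * Zk K ν k := by
  obtain ⟨C, hC, hbm⟩ := hBM ε hε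
  refine ⟨C, hC, fun k hk => ?_⟩
  obtain ⟨z, hz, hmax⟩ := exists_norm_VDM_eq_vdmMax hK hne k
  have key := le_pow_card_mul_lintegral_pi (measurable_vdmSqOn hK k)
    (vdmSqOn_le_mul_lintegral_update hK (hbm k hk)) z
  rw [lintegral_vdmSqOn hK, Fintype.card_fin, ← ENNReal.ofReal_pow (sq_nonneg _),
    ← ENNReal.ofReal_mul (by positivity), vdmSqOn_of_mem hz, hmax,
    ENNReal.ofReal_le_ofReal_iff (mul_nonneg (by positivity) (Zk_nonneg K ν k))] at key
  exact key

end Zk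

section Asymptotics

theorem tendsto_of_le_mul_of_le_mul {u a r : ℕ → ℝ} {δ : ℝ} (hu : Tendsto u atTop (𝓝 δ))
    (hr : Tendsto r atTop (𝓝 1)) (hupper : ∀ᶠ k in atTop, a k ≤ u k * r k)
    (hlower : ∀ ε > 0, ∃ s : ℕ → ℝ,
      Tendsto s atTop (𝓝 ((1 + ε) ^ 2)) ∧ ∀ᶠ k in atTop, u k ≤ s k * a k) :
    Tendsto a atTop (𝓝 δ) := by
  rw [tendsto_order]
  refine ⟨fun x hx => ?_, fun x hx => ?_⟩
  · have hcont : Tendsto (fun ε : ℝ => x * (1 + ε) ^ 2) (𝓝[>] 0) (𝓝 x) := by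
      have : Continuous fun ε : ℝ => x * (1 + ε) ^ 2 := by fun_prop
      simpa using (this.tendsto 0).mono_left nhdsWithin_le_nhds
    obtain ⟨ε, hεx, hε⟩ := ((hcont.eventually (gt_mem_nhds hx)).and self_mem_nhdsWithin).exists
    obtain ⟨s, hs, hus⟩ := hlower ε hε
    filter_upwards [(hs.const_mul x).eventually_lt hu hεx, hus,
      hs.eventually (lt_mem_nhds (by positivity))] with k hxu hua hspos
    exact lt_of_mul_lt_mul_left (by linarith) hspos.le
  · filter_upwards [hupper, (hu.mul hr).eventually (gt_mem_nhds (by simpa using hx))]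
      with k hk hkx
    exact hk.trans_lt hkx

theorem tendsto_pow_rpow_one_div_sq {c : ℝ} (hc : 0 < c) {m : ℕ → ℕ} {L : ℝ}
    (hm : Tendsto (fun k => (m k : ℝ) / (k : ℝ) ^ 2) atTop (𝓝 L)) :
    Tendsto (fun k => (c ^ m k) ^ (1 / (k : ℝ) ^ 2)) atTop (𝓝 (c ^ L)) :=
  (tendsto_const_nhds.rpow hm (Or.inl hc.ne')).congr fun k => by
    rw [← Real.rpow_natCast_mul hc.le, mul_one_div]

theorem tendsto_succ_div_self : Tendsto (fun k : ℕ => ((k : ℝ) + 1) / k) atTop (𝓝 1) := by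
  simpa [add_comm] using tendsto_add_mul_div_add_mul_atTop_nhds (1 : ℝ) 0 1 one_ne_zero

theorem tendsto_succ_div_sq :
    Tendsto (fun k : ℕ => ((k + 1 : ℕ) : ℝ) / (k : ℝ) ^ 2) atTop (𝓝 0) := by
  have h : Tendsto (fun k : ℕ => ((k : ℝ) + 1) / k * (1 / k)) atTop (𝓝 0) := by
    simpa using tendsto_succ_div_self.mul tendsto_one_div_atTop_nhds_zero_nat
  refine h.congr' ?_
  filter_upwards [eventually_ne_atTop 0] with k hk
  field_simp
  push_cast
  ring

theorem tendsto_mul_succ_div_sq :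
    Tendsto (fun k : ℕ => ((k * (k + 1) : ℕ) : ℝ) / (k : ℝ) ^ 2) atTop (𝓝 1) := by
  refine tendsto_succ_div_self.congr' ?_
  filter_upwards [eventually_ne_atTop 0] with k hk
  field_simp
  push_cast
  ring

end Asymptotics

theorem tendsto_Zk_rpow {K : Set ℂ} {ν : Measure ℂ} [IsFiniteMeasure ν] (hK : IsCompact K)
    (hBM : BernsteinMarkov K ν) {δ : ℝ} (hδ : Tendsto (deltak K) atTop (𝓝 δ)) :
    Tendsto (fun k => Zk K ν k ^ ((1 : ℝ) / (k : ℝ) ^ 2)) atTop (𝓝 δ) := by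
  rcases K.eq_empty_or_nonempty with rfl | hne
  · have hzero : deltak (∅ : Set ℂ) = fun _ => 0 := by
      funext k
      simp [deltak]
    obtain rfl : δ = 0 := tendsto_nhds_unique hδ (hzero ▸ tendsto_const_nhds)
    refine tendsto_const_nhds.congr' ?_
    filter_upwards [eventually_ne_atTop 0] with k hk
    simp [Zk, hk]
  have hu : Tendsto (fun k => (vdmMax K k ^ 2) ^ (1 / (k : ℝ) ^ 2)) atTop (𝓝 δ) := by
    have h := hδ.rpow tendsto_succ_div_self (Or.inr one_pos)
    rw [Real.rpow_one] at h
    refine h.congr' ?_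
    filter_upwards [eventually_ne_atTop 0] with k hk
    exact deltak_rpow_succ_div_self hK hne hk
  refine tendsto_of_le_mul_of_le_mul hu
    (by simpa only [Real.rpow_zero] using
      tendsto_pow_rpow_one_div_sq (hBM.measureReal_pos hne) tendsto_succ_div_sq)
    (Eventually.of_forall fun k => ?_) fun ε hε => ?_
  · rw [← Real.mul_rpow (by positivity) (by positivity)]
    exact Real.rpow_le_rpow (Zk_nonneg K ν k) (Zk_le hK k) (by positivity)
  obtain ⟨C, hC, hCk⟩ := hBM.exists_sq_vdmMax_le hK hne hε
  refine ⟨fun k => ((C ^ 2) ^ (k + 1)) ^ (1 / (k : ℝ) ^ 2) *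
    (((1 + ε) ^ 2) ^ (k * (k + 1))) ^ (1 / (k : ℝ) ^ 2), ?_, ?_⟩
  · simpa only [Real.rpow_zero, Real.rpow_one, one_mul] using
      (tendsto_pow_rpow_one_div_sq (by positivity) tendsto_succ_div_sq).mul
        (tendsto_pow_rpow_one_div_sq (by positivity) tendsto_mul_succ_div_sq)
  filter_upwards [eventually_ge_atTop 1] with k hk
  rw [← Real.mul_rpow (by positivity) (by positivity), ← Real.mul_rpow (by positivity)
    (Zk_nonneg K ν k)]
  refine Real.rpow_le_rpow (by positivity) ((hCk k hk).trans_eq ?_) (by positivity)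
  generalize 1 + ε = x
  ring

theorem Zk_tendsto_transfinite_diameter_general (K : Set ℂ) (hK : IsCompact K)
    (ν : Measure ℂ) [IsFiniteMeasure ν] (hBM : BernsteinMarkov K ν) :
    ∃ δ : ℝ, 0 ≤ δ ∧
      (∀ m n : ℕ, 1 ≤ m → m ≤ n → deltak K n ≤ deltak K m) ∧
      Tendsto (fun k => deltak K k) atTop (nhds δ) ∧
      Tendsto (fun k => Zk K ν k ^ ((1 : ℝ) / ((k : ℝ) ^ 2))) atTop (nhds δ) :=
  ⟨_, ge_of_tendsto' (tendsto_deltak hK) (deltak_nonneg K), fun _ _ => deltak_le_of_le hK,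
    tendsto_deltak hK, tendsto_Zk_rpow hK hBM (tendsto_deltak hK)⟩

/-- If `K ⊂ ℂ` is compact and `(K, ν)` satisfies the Bernstein–Markov property, then there
is `δ(K) ≥ 0` (the transfinite diameter) such that `δ_k(K) → δ(K)` (the sequence `δ_k(K)`
being nonincreasing) and `Z_k^{1/k²} → δ(K)` as `k → ∞`. -/
theorem Zk_tendsto_transfinite_diameter (K : Set ℂ) (hK : IsCompact K)
    (ν : Measure ℂ) [IsFiniteMeasure ν] (hν : ν Kᶜ = 0) (hBM : BernsteinMarkov K ν) :
    ∃ δ : ℝ, 0 ≤ δ ∧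
      (∀ m n : ℕ, 1 ≤ m → m ≤ n → deltak K n ≤ deltak K m) ∧
      Tendsto (fun k => deltak K k) atTop (nhds δ) ∧
      Tendsto (fun k => Zk K ν k ^ ((1 : ℝ) / ((k : ℝ) ^ 2))) atTop (nhds δ) :=
  Zk_tendsto_transfinite_diameter_general K hK ν hBM
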